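/- arXiv:2312.10799 — 5 statements merged into one kernel-verified Lean document; each statement's English description precedes it below -/
import Mathlib

section
/- (Weak Nullstellensatz over ℍ, one variable) For a left ideal I of ℍ[x], the zero locus 𝓥(I) = { a ∈ ℍ : F(a) = 0 for all F ∈ I } is empty if and only if I = ℍ[x]. -/
/-!
Over a division ring `D`, dividing on the right by monic polynomials shows that every left ideal
of `D[X]` is generated by one polynomial `g`, and a left multiple `h * g` vanishes wherever `g`
does. So the theorem reduces to Niven's fact that a non-constant `g ∈ ℍ[X]` has a root.

Let `ḡ` be `g` with conjugated coefficients. Then `ḡ g` has real coefficients, so it has a complex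
root `z`. If `z` is real, `ḡ(z) g(z) = |g(z)|² = 0`. Otherwise the real quadratic `c` with roots
`z, z̄` divides `ḡ g`; write `g = d c + r` with `deg r ≤ 1`. As `c` is central, `c ∣ r̄ r`, and
comparing degrees gives either `r = 0` (so the embedded `z` is a root of `g`) or `r̄ r = κ c` with
`r` linear, in which case the root of `r` is a root of `r̄ r`, hence of `c`, hence of `g`.
-/

open Polynomial MulOpposite

namespace Polynomial

theorem eval_mul_eq_zero_of_eval_eq_zero {R : Type*} [Semiring R] (p : R[X]) {q : R[X]} {a : R}
    (hq : q.eval a = 0) : (p * q).eval a = 0 := by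
  induction p using Polynomial.induction_on' with
  | add f g hf hg => rw [add_mul, eval_add, hf, hg, add_zero]
  | monomial n c =>
    rw [← C_mul_X_pow_eq_monomial, mul_assoc, X_pow_mul, eval_C_mul, eval_mul_X_pow, hq,
      zero_mul, mul_zero]

theorem commute_map_algebraMap {R A : Type*} [CommSemiring R] [Semiring A] [Algebra R A]
    (c : R[X]) (p : A[X]) : Commute (c.map (algebraMap R A)) p := by
  induction c using Polynomial.induction_on' with
  | add f g hf hg => simpa only [Polynomial.map_add] using hf.add_left hg
  | monomial n a =>
    rw [map_monomial, ← C_mul_X_pow_eq_monomial, ← algebraMap_apply]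
    exact (Algebra.commute_algebraMap_left a p).mul_left (commute_X_pow p n)

theorem degree_opRingEquiv {R : Type*} [Semiring R] (p : R[X]ᵐᵒᵖ) :
    (opRingEquiv R p).degree = (unop p).degree := by
  simp only [degree, support_opRingEquiv]

theorem exists_eq_mul_add_of_monic {R : Type*} [Ring R] [Nontrivial R] (p : R[X]) {q : R[X]}
    (hq : q.Monic) : ∃ d r : R[X], p = d * q + r ∧ r.degree < q.degree := by
  set e := opRingEquiv R
  have hq' : (e (op q)).Monic := by
    simp [e, Monic, hq.leadingCoeff]
  refine ⟨unop (e.symm (e (op p) /ₘ e (op q))), unop (e.symm (e (op p) %ₘ e (op q))), ?_, ?_⟩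
  · apply op_injective
    have h := congrArg e.symm (modByMonic_add_div (e (op p)) (e (op q)))
    simp only [map_add, map_mul, RingEquiv.symm_apply_apply] at h
    simpa [add_comm] using h.symm
  · have := degree_modByMonic_lt (e (op p)) hq'
    rwa [← degree_opRingEquiv, RingEquiv.apply_symm_apply, ← unop_op q, ← degree_opRingEquiv]

section DivisionRing

variable {D : Type*} [DivisionRing D]

theorem exists_eval_eq_zero_of_natDegree_eq_one {r : D[X]} (hr : r.natDegree = 1) :
    ∃ u, r.eval u = 0 := by
  have hlc : r.coeff 1 ≠ 0 := by
    rw [← hr]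
    exact leadingCoeff_ne_zero.mpr (ne_zero_of_natDegree_gt (hr ▸ Nat.one_pos))
  refine ⟨-((r.coeff 1)⁻¹ * r.coeff 0), ?_⟩
  rw [eq_X_add_C_of_natDegree_le_one hr.le]
  simp [← mul_assoc, mul_inv_cancel₀ hlc]

theorem exists_monic_mem_natDegree_le {I : Ideal D[X]} {p : D[X]} (hp : p ∈ I) (hp0 : p ≠ 0) :
    ∃ q ∈ I, q.Monic ∧ q.natDegree ≤ p.natDegree :=
  ⟨C p.leadingCoeff⁻¹ * p, I.mul_mem_left _ hp,
    monic_C_mul_of_mul_leadingCoeff_eq_one (inv_mul_cancel₀ (leadingCoeff_ne_zero.mpr hp0)),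
    natDegree_C_mul_le _ _⟩

instance isPrincipalIdealRing_of_divisionRing : IsPrincipalIdealRing D[X] where
  principal I := by
    classical
    by_cases hI : I = ⊥
    · exact hI ▸ bot_isPrincipal
    obtain ⟨p, hp, hp0⟩ := Submodule.exists_mem_ne_zero_of_ne_bot hI
    have hex : ∃ n, ∃ g ∈ I, g.Monic ∧ g.natDegree = n :=
      let ⟨g, hg, hm, _⟩ := exists_monic_mem_natDegree_le hp hp0
      ⟨_, g, hg, hm, rfl⟩
    obtain ⟨g, hgI, hg, hgn⟩ := Nat.find_spec hex
    refine ⟨g, le_antisymm (fun F hF => ?_) ((Ideal.span_singleton_le_iff_mem I).mpr hgI)⟩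
    obtain ⟨d, r, rfl, hr⟩ := exists_eq_mul_add_of_monic F hg
    have hrI : r ∈ I := (I.add_mem_iff_right (I.mul_mem_left d hgI)).mp hF
    obtain rfl : r = 0 := by
      by_contra hr0
      obtain ⟨q, hqI, hq, hqn⟩ := exists_monic_mem_natDegree_le hrI hr0
      exact Nat.find_min hex (hqn.trans_lt (hgn ▸ natDegree_lt_natDegree hr0 hr)) ⟨q, hqI, hq, rfl⟩
    exact (add_zero (d * g)).symm ▸ Ideal.mem_span_singleton'.mpr ⟨d, rfl⟩

end DivisionRing

section StarCoeff

variable {R : Type*} [Semiring R] [StarRing R]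

/-- Coefficientwise `star`. Going through `opRingEquiv` makes it reverse products for free. -/
noncomputable def starCoeff (p : R[X]) : R[X] :=
  (opRingEquiv R (op p)).map (starRingEquiv : R ≃+* Rᵐᵒᵖ).symm.toRingHom

@[simp]
theorem coeff_starCoeff (p : R[X]) (n : ℕ) : (starCoeff p).coeff n = star (p.coeff n) := by
  simp [starCoeff, RingEquiv.symm_apply_eq]

@[simp]
theorem starCoeff_add (p q : R[X]) : starCoeff (p + q) = starCoeff p + starCoeff q := by
  simp [starCoeff, Polynomial.map_add]

@[simp]
theorem starCoeff_mul (p q : R[X]) : starCoeff (p * q) = starCoeff q * starCoeff p := by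
  simp [starCoeff, Polynomial.map_mul]

@[simp]
theorem starCoeff_eq_zero {p : R[X]} : starCoeff p = 0 ↔ p = 0 := by
  simp [Polynomial.ext_iff]

@[simp]
theorem natDegree_starCoeff (p : R[X]) : (starCoeff p).natDegree = p.natDegree := by
  rw [starCoeff, natDegree_map_eq_of_injective (starRingEquiv (R := R)).symm.injective,
    natDegree_opRingEquiv, unop_op]

theorem isSelfAdjoint_coeff_starCoeff_mul_self (p : R[X]) (n : ℕ) :
    IsSelfAdjoint ((starCoeff p * p).coeff n) := by
  rw [IsSelfAdjoint, coeff_mul, star_sum, ← Finset.Nat.sum_antidiagonal_swap]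
  simp

end StarCoeff

end Polynomial

theorem Complex.aeval_quadratic_self (z : ℂ) :
    aeval z (X ^ 2 - C (2 * z.re) * X + C (‖z‖ ^ 2) : ℝ[X]) = 0 := by
  rw [Complex.sq_norm, Complex.normSq_apply]
  apply Complex.ext <;> simp [sq] <;> ring

local notation "ℍ" => Quaternion ℝ

theorem Quaternion.starCoeff_map_algebraMap (c : ℝ[X]) :
    starCoeff (c.map (algebraMap ℝ ℍ)) = c.map (algebraMap ℝ ℍ) := by
  ext n : 1
  simp [coeff_map, algebraMap_def]

theorem Quaternion.starCoeff_mul_self_mem_lifts (p : ℍ[X]) :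
    starCoeff p * p ∈ lifts (algebraMap ℝ ℍ) :=
  (lifts_iff_coeff_lifts _).mpr fun n =>
    ⟨_, (star_eq_self.mp (isSelfAdjoint_coeff_starCoeff_mul_self p n)).symm⟩

theorem Quaternion.eval_mul_coe (p q : ℍ[X]) (x : ℝ) :
    (p * q).eval (x : ℍ) = p.eval ↑x * q.eval ↑x :=
  eval₂_mul_noncomm _ _ fun _ => (coe_commute x _).symm

theorem Quaternion.eval_starCoeff_coe (p : ℍ[X]) (x : ℝ) :
    (starCoeff p).eval (x : ℍ) = star (p.eval ↑x) := by
  simp only [eval_eq_sum_range, natDegree_starCoeff, coeff_starCoeff, star_sum, star_mul,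
    ← coe_pow, star_coe, (coe_commute _ _).eq]

theorem Quaternion.isRoot_of_isRoot_starCoeff_mul_self {f : ℍ[X]} {x : ℝ}
    (h : IsRoot (starCoeff f * f) (x : ℍ)) : IsRoot f (x : ℍ) := by
  rwa [IsRoot, eval_mul_coe, eval_starCoeff_coe, mul_eq_zero, star_eq_zero, or_self] at h

theorem Quaternion.exists_isRoot_of_dvd_starCoeff_mul_self {r : ℍ[X]} {c : ℝ[X]} (hc : c.Monic)
    (hc2 : c.natDegree = 2) (hr0 : r ≠ 0) (hr : r.natDegree < 2)
    (hdvd : c.map (algebraMap ℝ ℍ) ∣ starCoeff r * r) :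
    ∃ u, IsRoot r u ∧ IsRoot (c.map (algebraMap ℝ ℍ)) u := by
  obtain ⟨k, hk⟩ := hdvd
  have hk0 : k ≠ 0 := by
    rintro rfl
    simp [hr0] at hk
  have hdeg : 2 + k.natDegree = r.natDegree + r.natDegree := by
    have h := natDegree_mul (starCoeff_eq_zero.not.mpr hr0) hr0
    rwa [natDegree_starCoeff, hk, (hc.map _).natDegree_mul' hk0, natDegree_map, hc2] at h
  obtain ⟨u, hu⟩ := exists_eval_eq_zero_of_natDegree_eq_one (by omega : r.natDegree = 1)
  have hkC : k = C (k.coeff 0) := eq_C_of_natDegree_eq_zero (by omega)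
  have hκ : k.coeff 0 ≠ 0 := fun h => hk0 (by rw [hkC, h, C_0])
  refine ⟨u, hu, ?_⟩
  have := eval_mul_eq_zero_of_eval_eq_zero (starCoeff r) hu
  rwa [hk, hkC, (commute_map_algebraMap c _).eq, eval_C_mul, mul_eq_zero, or_iff_right hκ] at this

theorem Quaternion.exists_isRoot_of_quadratic_dvd_starCoeff_mul_self (f : ℍ[X]) {c : ℝ[X]}
    (hc : c.Monic) (hc2 : c.natDegree = 2) {u₀ : ℍ} (hu₀ : aeval u₀ c = 0)
    (hdvd : c.map (algebraMap ℝ ℍ) ∣ starCoeff f * f) : ∃ u, IsRoot f u := by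
  set c' := c.map (algebraMap ℝ ℍ)
  have hc' : c'.Monic := hc.map _
  set d := f /ₘ c'
  set r := f %ₘ c'
  have hf : f = d * c' + r := by
    rw [← (commute_map_algebraMap c d).eq, add_comm, modByMonic_add_div]
  have hroot : ∀ u, IsRoot c' u → IsRoot r u → IsRoot f u := fun u hcu hru => by
    rw [IsRoot, hf, eval_add, eval_mul_eq_zero_of_eval_eq_zero d hcu, hru.eq_zero, add_zero]
  have hdvd_r : c' ∣ starCoeff r * r := by
    have hexp : starCoeff f * f = c' * (starCoeff d * f + starCoeff r * d) + starCoeff r * r := by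
      have hfbar : starCoeff f = c' * starCoeff d + starCoeff r := by
        rw [hf, starCoeff_add, starCoeff_mul, starCoeff_map_algebraMap]
      rw [hfbar, hf, add_mul, mul_add (starCoeff r), ← mul_assoc (starCoeff r),
        ← (commute_map_algebraMap c (starCoeff r * d)).eq]
      noncomm_ring
    rwa [hexp, dvd_add_right (dvd_mul_right _ _)] at hdvd
  by_cases hr0 : r = 0
  · exact ⟨u₀, hroot u₀ (by rwa [IsRoot, eval_map_algebraMap]) (by simp [hr0])⟩
  · have hc'2 : c'.natDegree = 2 := by rw [natDegree_map, hc2]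
    have hr : r.natDegree < 2 :=
      hc'2 ▸ natDegree_modByMonic_lt f hc' fun h => by simp [h] at hc'2
    obtain ⟨u, hru, hcu⟩ := exists_isRoot_of_dvd_starCoeff_mul_self hc hc2 hr0 hr hdvd_r
    exact ⟨u, hroot u hcu hru⟩

theorem Quaternion.exists_root {f : ℍ[X]} (hf : 0 < degree f) : ∃ a, IsRoot f a := by
  have hf0 : f ≠ 0 := ne_zero_of_degree_gt hf
  obtain ⟨P, hP⟩ := (mem_lifts _).mp (starCoeff_mul_self_mem_lifts f)
  have hP0 : 0 < P.natDegree := by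
    rw [← natDegree_map_eq_of_injective (algebraMap ℝ ℍ).injective, hP,
      natDegree_mul (starCoeff_eq_zero.not.mpr hf0) hf0, natDegree_starCoeff]
    have := natDegree_pos_iff_degree_pos.mpr hf
    omega
  obtain ⟨z, hz⟩ := IsAlgClosed.exists_aeval_eq_zero ℂ P (natDegree_pos_iff_degree_pos.mp hP0).ne'
  have hzroot : IsRoot (starCoeff f * f) (z : ℍ) := by
    rw [IsRoot, ← hP, eval_map_algebraMap, ← coe_ofComplex, aeval_algHom_apply, hz, map_zero]
  by_cases hz0 : z.im = 0
  · have hzre : (z : ℍ) = (z.re : ℍ) := by ext <;> simp [hz0]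
    exact ⟨_, isRoot_of_isRoot_starCoeff_mul_self (hzre ▸ hzroot)⟩
  · refine exists_isRoot_of_quadratic_dvd_starCoeff_mul_self f
      (c := X ^ 2 - C (2 * z.re) * X + C (‖z‖ ^ 2)) (by monicity!) (by compute_degree!)
      (u₀ := z) ?_ (hP ▸ Polynomial.map_dvd _ (quadratic_dvd_of_aeval_eq_zero_im_ne_zero P hz hz0))
    rw [← coe_ofComplex, aeval_algHom_apply, Complex.aeval_quadratic_self, map_zero]

theorem Quaternion.exists_root_of_not_isUnit {f : ℍ[X]} (hf : ¬IsUnit f) : ∃ a, IsRoot f a := by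
  rcases lt_or_ge 0 f.degree with hpos | hle
  · exact exists_root hpos
  · rw [eq_C_of_degree_le_zero hle] at hf ⊢
    refine ⟨0, ?_⟩
    by_contra h
    exact hf (IsUnit.map C (isUnit_iff_ne_zero.mpr (by simpa using h)))

theorem weak_nullstellensatz_quaternions (I : Ideal (Polynomial (Quaternion ℝ))) :
    {a : Quaternion ℝ | ∀ F ∈ I, F.eval a = 0} = ∅ ↔ I = ⊤ := by
  refine ⟨fun hV => ?_, ?_⟩
  · by_contra hI
    obtain ⟨g, rfl⟩ := IsPrincipalIdealRing.principal I
    obtain ⟨a, ha⟩ := Quaternion.exists_root_of_not_isUnit fun hg =>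
      hI (Ideal.eq_top_of_isUnit_mem _ (Ideal.mem_span_singleton_self g) hg)
    have haV : a ∈ {a : Quaternion ℝ | ∀ F ∈ Ideal.span {g}, F.eval a = 0} := fun F hF => by
      obtain ⟨d, rfl⟩ := Ideal.mem_span_singleton'.mp hF
      exact eval_mul_eq_zero_of_eval_eq_zero d ha
    simp [hV] at haV
  · rintro rfl
    exact Set.eq_empty_of_forall_notMem fun a ha => by simpa using ha 1 Submodule.mem_top
end

section
/- (Converse direction of quaternionic Nullstellensatz) Let I be a left ideal of ℍ[x] and F ∈ ℍ[x]. If for every a ∈ ℍ there exist N ≥ 1 and polynomials G₀, …, G_N ∈ I with (aF)^N = G₀ + G₁·(aF) + ⋯ + G_N·(aF)^N, then F(p) = 0 for every p ∈ 𝓥(I). -/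
open Polynomial

private lemma eval_mul_of_eval_one {p : Quaternion ℝ} {g : Polynomial (Quaternion ℝ)}
    (hg : g.eval p = 1) (f : Polynomial (Quaternion ℝ)) :
    (f * g).eval p = f.eval p := by
  induction f using Polynomial.induction_on' with
  | add r s hr hs => rw [add_mul, eval_add, eval_add, hr, hs]
  | monomial n c =>
      rw [← C_mul_X_pow_eq_monomial, mul_assoc, (commute_X_pow g n).eq, ← mul_assoc]
      simp only [eval_C_mul, eval_mul_X_pow, eval_pow, eval_X, eval_C, hg, mul_one, one_mul]

theorem nullstellensatz_quaternions_converse (I : Ideal (Polynomial (Quaternion ℝ)))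
    (F : Polynomial (Quaternion ℝ))
    (h : ∀ a : Quaternion ℝ, ∃ N : ℕ, 1 ≤ N ∧
      ∃ G : Fin (N + 1) → Polynomial (Quaternion ℝ), (∀ m, G m ∈ I) ∧
        (C a * F) ^ N = ∑ m : Fin (N + 1), G m * (C a * F) ^ (m : ℕ)) :
    ∀ p : Quaternion ℝ, (∀ G ∈ I, G.eval p = 0) → F.eval p = 0 := by
  intro p hp
  by_contra hF
  set a : Quaternion ℝ := (F.eval p)⁻¹ with ha
  have haF : (C a * F).eval p = 1 := by
    rw [eval_C_mul, ha, inv_mul_cancel₀ hF]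
  have hpow : ∀ k : ℕ, ((C a * F) ^ k).eval p = 1 := by
    intro k
    induction k with
    | zero => simp
    | succ n ih => rw [pow_succ, eval_mul_of_eval_one haF, ih]
  obtain ⟨N, hN, G, hG, hEq⟩ := h a
  have := congrArg (Polynomial.eval p) hEq
  rw [hpow N, eval_finset_sum] at this
  have hz : ∀ m : Fin (N + 1), (G m * (C a * F) ^ (m : ℕ)).eval p = 0 := by
    intro m
    rw [eval_mul_of_eval_one (hpow m), hp _ (hG m)]
  rw [Finset.sum_congr rfl (fun m _ => hz m), Finset.sum_const, smul_zero] at this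
  exact one_ne_zero this
end

section
/- The zero locus of the left ideal of ℍ[x] generated by x - i is exactly {i}, where i is the quaternion imaginary unit. -/
open Polynomial

/-- The quaternion imaginary unit `i`. -/
def qI : Quaternion ℝ := ⟨0, 1, 0, 0⟩

lemma eval_mul_X_sub_C_qI (q : Polynomial (Quaternion ℝ)) :
    (q * (X - C qI)).eval qI = 0 := by
  induction q using Polynomial.induction_on' with
  | add f g hf hg =>
      rw [add_mul, eval_add, hf, hg, add_zero]
  | monomial n a =>
      rw [mul_sub, eval_sub, monomial_mul_X, monomial_mul_C,
        eval_monomial, eval_monomial, mul_assoc, ← pow_succ', sub_self]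

theorem zero_locus_X_sub_i :
    {p : Quaternion ℝ | ∀ F ∈ Ideal.span ({X - C qI} : Set (Polynomial (Quaternion ℝ))),
        F.eval p = 0} = {qI} := by
  ext p
  simp only [Set.mem_setOf_eq, Set.mem_singleton_iff]
  constructor
  · intro h
    have := h (X - C qI) (Ideal.subset_span rfl)
    rw [eval_sub, eval_X, eval_C, sub_eq_zero] at this
    exact this
  · rintro rfl F hF
    rw [Ideal.span, Submodule.mem_span_singleton] at hF
    obtain ⟨a, rfl⟩ := hF
    rw [smul_eq_mul]
    exact eval_mul_X_sub_C_qI a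
end

section
/- Let I be the left ideal of ℍ[x] generated by x - i, and let b ∈ ℍ satisfy b² = -1 and b ≠ ±i. Then the constant polynomial b satisfies b ∈ I + I·b; explicitly, b = -(b(bi - ib)⁻¹ b)·(x - i) + (b(bi - ib)⁻¹)·(x - i)·b. -/
/-!
As `X` is central, `-(p * b) * (X - i) + p * (X - i) * b = p * (b * i - i * b)`, which is `b` for
`p = b * (b * i - i * b)⁻¹`. The commutator is nonzero because the only square roots of `-1`
commuting with `i` are `±i`.
-/

open Polynomial

theorem Commute.neg_mul_mul_sub_add_mul_sub_mul {R : Type*} [Ring R] {x q : R} (h : Commute x q)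
    (p r : R) : -(p * q) * (x - r) + p * (x - r) * q = p * (q * r - r * q) := by
  simp only [mul_sub, sub_mul, neg_mul, mul_assoc, h.eq]
  abel

theorem Polynomial.C_eq_neg_C_mul_X_sub_C_add_C_mul_X_sub_C_mul_C {D : Type*} [DivisionRing D]
    {b r : D} (hbr : b * r - r * b ≠ 0) :
    (C b : D[X]) = -C (b * (b * r - r * b)⁻¹ * b) * (X - C r) +
      C (b * (b * r - r * b)⁻¹) * (X - C r) * C b := by
  rw [C_mul, (commute_X (C b)).neg_mul_mul_sub_add_mul_sub_mul, ← C_mul, ← C_mul, ← C_sub,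
    ← C_mul, mul_assoc, inv_mul_cancel₀ hbr, mul_one]

@[simp] theorem qI_re : qI.re = 0 := rfl
@[simp] theorem qI_imI : qI.imI = 1 := rfl
@[simp] theorem qI_imJ : qI.imJ = 0 := rfl
@[simp] theorem qI_imK : qI.imK = 0 := rfl

theorem eq_qI_or_eq_neg_qI_of_sq_eq_neg_one_of_commute {b : Quaternion ℝ} (hb : b ^ 2 = -1)
    (hc : Commute b qI) : b = qI ∨ b = -qI := by
  have hcomm := Quaternion.ext_iff.mp hc.eq
  have hsq := Quaternion.ext_iff.mp (pow_two b ▸ hb)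
  simp only [Quaternion.re_mul, Quaternion.imI_mul, Quaternion.imJ_mul, Quaternion.imK_mul,
    Quaternion.re_neg, Quaternion.imI_neg, Quaternion.imJ_neg, Quaternion.imK_neg,
    Quaternion.re_one, Quaternion.imI_one, qI_re, qI_imI, qI_imJ, qI_imK] at hcomm hsq
  have hJ : b.imJ = 0 := by linarith [hcomm.2.2.1]
  have hK : b.imK = 0 := by linarith [hcomm.2.2.2]
  have hsq₀ : b.re * b.re - b.imI * b.imI = -1 := by simpa [hJ, hK] using hsq.1
  have hre : b.re = 0 := by
    rcases mul_eq_zero.mp (show b.re * b.imI = 0 by linear_combination hsq.2.1 / 2) with h | h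
    · exact h
    · nlinarith [mul_self_nonneg b.re]
  have hI : b.imI * b.imI = 1 := by linear_combination -hsq₀ + b.re * hre
  rcases mul_self_eq_one_iff.mp hI with h | h
  · left; ext <;> simp [hre, h, hJ, hK]
  · right; ext <;> simp [hre, h, hJ, hK]

theorem mul_qI_sub_qI_mul_ne_zero {b : Quaternion ℝ} (hb : b ^ 2 = -1) (hbi : b ≠ qI)
    (hbi' : b ≠ -qI) : b * qI - qI * b ≠ 0 := fun h ↦ by
  rcases eq_qI_or_eq_neg_qI_of_sq_eq_neg_one_of_commute hb (sub_eq_zero.mp h) with h | h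
  exacts [hbi h, hbi' h]

theorem const_b_mem_I_add_Ib (b : Quaternion ℝ) (hb : b ^ 2 = -1)
    (hbi : b ≠ qI) (hbi' : b ≠ -qI) :
    (C b : Polynomial (Quaternion ℝ)) =
        -(C (b * (b * qI - qI * b)⁻¹ * b)) * (X - C qI) +
          (C (b * (b * qI - qI * b)⁻¹)) * (X - C qI) * C b ∧
    (∃ G₀ ∈ Ideal.span ({X - C qI} : Set (Polynomial (Quaternion ℝ))),
      ∃ G₁ ∈ Ideal.span ({X - C qI} : Set (Polynomial (Quaternion ℝ))),
        (C b : Polynomial (Quaternion ℝ)) = G₀ + G₁ * C b) := by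
  have key :=
    C_eq_neg_C_mul_X_sub_C_add_C_mul_X_sub_C_mul_C (mul_qI_sub_qI_mul_ne_zero hb hbi hbi')
  exact ⟨key, _, Ideal.mem_span_singleton'.mpr ⟨_, rfl⟩,
    _, Ideal.mem_span_singleton'.mpr ⟨_, rfl⟩, key⟩
end

section
/- Let I be a left ideal of ℍ[x] and F ∈ ℍ[x]. Suppose there exist N ≥ 1, polynomials G₀, …, G_N ∈ I, and G ∈ ℍ[x][y] such that G·(Fy - 1) + Σ_{m=0}^{N} G_m·y^m = 1 in ℍ[x][y]. Then F^N ∈ I + I·F + I·F² + ⋯ + I·F^N. -/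
/-!
Substituting `y ↦ F⁻¹` and multiplying by `Fⁿ` amounts, coefficientwise, to the additive map
`P ↦ ∑_{k ≤ n} P_k Fⁿ⁻ᵏ`, which needs no inverse. On `G (F y - 1)` it telescopes to `-g_n`,
where `g_n` is the `n`-th coefficient of `G`. For `n` beyond the degree of `G` the hypothesis
becomes `Fⁿ = ∑ₘ Gₘ Fⁿ⁻ᵐ = (∑ₘ Gₘ Fᴺ⁻ᵐ) Fⁿ⁻ᴺ`, and `Fⁿ⁻ᴺ` cancels since `ℍ[x]` has no zero
divisors.
-/

open Polynomial Finset

namespace Polynomial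

variable {R : Type*} [Ring R]

/-- `Fⁿ P(F⁻¹)`, with every power of `F` multiplied on the right. -/
def clearEval (F : R) (n : ℕ) : R[X] →+ R where
  toFun P := ∑ k ∈ range (n + 1), P.coeff k * F ^ (n - k)
  map_zero' := by simp
  map_add' P Q := by simp [add_mul, sum_add_distrib]

theorem clearEval_apply (F : R) (n : ℕ) (P : R[X]) :
    clearEval F n P = ∑ k ∈ range (n + 1), P.coeff k * F ^ (n - k) :=
  rfl

theorem clearEval_succ (F : R) (n : ℕ) (P : R[X]) :
    clearEval F (n + 1) P = clearEval F n P * F + P.coeff (n + 1) := by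
  rw [clearEval_apply, sum_range_succ, Nat.sub_self, pow_zero, mul_one, clearEval_apply, sum_mul]
  congr 1
  refine sum_congr rfl fun k hk => ?_
  rw [mul_assoc, ← pow_succ, Nat.sub_add_comm (Nat.lt_succ_iff.mp (mem_range.mp hk))]

theorem clearEval_one (F : R) (n : ℕ) : clearEval F n 1 = F ^ n := by
  induction n with
  | zero => simp [clearEval_apply]
  | succ n ih => rw [clearEval_succ, ih, coeff_one, if_neg n.succ_ne_zero, add_zero, pow_succ]

theorem clearEval_C_mul_X_pow (F : R) {m n : ℕ} (hmn : m ≤ n) (a : R) :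
    clearEval F n (C a * X ^ m) = a * F ^ (n - m) := by
  rw [clearEval_apply, sum_eq_single_of_mem m (mem_range.mpr (Nat.lt_succ_of_le hmn))]
  · rw [coeff_C_mul_X_pow, if_pos rfl]
  · intro k _ hkm
    rw [coeff_C_mul_X_pow, if_neg hkm, zero_mul]

theorem clearEval_mul_C_mul_X_sub_one (F : R) (n : ℕ) (Q : R[X]) :
    clearEval F n (Q * (C F * X - 1)) = -Q.coeff n := by
  have hcoeff : ∀ k, (Q * (C F * X - 1)).coeff k = (Q * C F * X).coeff k - Q.coeff k := by
    simp [mul_sub, mul_assoc]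
  induction n with
  | zero => simp [clearEval_apply, hcoeff]
  | succ n ih =>
    rw [clearEval_succ, ih, hcoeff, coeff_mul_X, coeff_mul_C, neg_mul, sub_eq_add_neg,
      neg_add_cancel_left]

end Polynomial

theorem pow_eq_sum_mul_pow_of_mul_sub_one_add_eq_one {R : Type*} [Ring R] [NoZeroDivisors R]
    {F : R} (hF : F ≠ 0) {N : ℕ} (s : Fin (N + 1) → R) (G : R[X])
    (h : G * (C F * X - 1) + ∑ m : Fin (N + 1), C (s m) * X ^ (m : ℕ) = 1) :
    F ^ N = ∑ m : Fin (N + 1), s m * F ^ (N - m) := by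
  set d := G.natDegree + 1
  have hclear := congrArg (clearEval F (N + d)) h
  rw [map_add, clearEval_mul_C_mul_X_sub_one,
    coeff_eq_zero_of_natDegree_lt (by omega), neg_zero, zero_add, map_sum, clearEval_one] at hclear
  have hshift : ∀ m : Fin (N + 1), clearEval F (N + d) (C (s m) * X ^ (m : ℕ)) =
      s m * F ^ (N - m) * F ^ d := by
    intro m
    rw [clearEval_C_mul_X_pow F (by omega), mul_assoc, ← pow_add, Nat.sub_add_comm (by omega)]
  simp only [hshift, ← sum_mul, pow_add] at hclear
  exact mul_right_cancel₀ (pow_ne_zero d hF) hclear.symm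

theorem clear_denominators (I : Ideal (Polynomial (Quaternion ℝ)))
    (F : Polynomial (Quaternion ℝ)) (N : ℕ) (hN : 1 ≤ N)
    (Gm : Fin (N + 1) → Polynomial (Quaternion ℝ)) (hGm : ∀ m, Gm m ∈ I)
    (G : Polynomial (Polynomial (Quaternion ℝ)))
    (h : G * (Polynomial.C F * Polynomial.X - 1) +
        ∑ m : Fin (N + 1), Polynomial.C (Gm m) * Polynomial.X ^ (m : ℕ) = 1) :
    ∃ H : Fin (N + 1) → Polynomial (Quaternion ℝ), (∀ m, H m ∈ I) ∧
      F ^ N = ∑ m : Fin (N + 1), H m * F ^ (m : ℕ) := by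
  by_cases hF : F = 0
  · refine ⟨0, fun _ => I.zero_mem, ?_⟩
    simp [hF, zero_pow (Nat.one_le_iff_ne_zero.mp hN)]
  refine ⟨fun m => Gm m.rev, fun m => hGm m.rev, ?_⟩
  rw [pow_eq_sum_mul_pow_of_mul_sub_one_add_eq_one hF Gm G h, ← Equiv.sum_comp Fin.revPerm]
  refine sum_congr rfl fun m _ => ?_
  rw [Fin.revPerm_apply, Fin.val_rev]
  have := m.isLt
  congr 2
  omega
end
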